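/- Let Φ be a positive trace-preserving linear map on n×n complex matrices such that 1 is a simple eigenvalue of Φ. Then the eigenvector for eigenvalue 1 can be normalized to be a state ρ_inv (positive semidefinite with trace 1), and for every state ρ, the Cesàro averages (1/N)∑_{k=0}^{N−1} Φ^k(ρ) converge to ρ_inv as N → ∞. -/

import Mathlib

/-!
A positive trace-preserving map `Φ` is power bounded: its powers keep positive semidefinite
matrices positive semidefinite with the same trace, the Frobenius norm of such a matrix is at most
its trace, and positive semidefinite matrices span all matrices. For a power-bounded operator on a
finite-dimensional space, `ker (Φ - 1)` and `range (Φ - 1)` are complementary, since the Cesàro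
averages of a fixed point `(Φ - 1) y` are all equal to it and also tend to `0`; hence the Cesàro
averages of any `x` converge to its component in `ker (Φ - 1)`. For a state this limit is a fixed
state, and a line of fixed points contains only one matrix of trace `1`.
-/

open Matrix
open scoped ComplexOrder

open Filter Topology Bornology Function

theorem Submodule.eq_of_map_eq_of_finrank_eq_one {K V : Type*} [Field K] [AddCommGroup V]
    [Module K V] {W : Submodule K V} (hW : Module.finrank K W = 1) (φ : V →ₗ[K] K) {x y : V}
    (hx : x ∈ W) (hy : y ∈ W) (hxy : φ x = φ y) (hx0 : φ x ≠ 0) : x = y := by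
  have hx0' : (⟨x, hx⟩ : W) ≠ 0 := fun h => hx0 (by simp [show x = 0 from congrArg Subtype.val h])
  obtain ⟨c, hc⟩ := (finrank_eq_one_iff_of_nonzero' _ hx0').1 hW ⟨y, hy⟩
  have hcxy : c • x = y := congrArg Subtype.val hc
  have hc1 : c = 1 := by
    have := congrArg φ hcxy
    rwa [map_smul, smul_eq_mul, ← hxy, mul_eq_right₀ hx0] at this
  rw [← hcxy, hc1, one_smul]

section MeanErgodic

variable {𝕜 E : Type*} [RCLike 𝕜] [NormedAddCommGroup E] [NormedSpace 𝕜 E] {f : E →ₗ[𝕜] E}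

theorem LinearMap.isBounded_orbit_of_span_eq_top {s : Set E} (hs : Submodule.span 𝕜 s = ⊤)
    (h : ∀ x ∈ s, IsBounded (Set.range fun k : ℕ => (f ^ k) x)) (x : E) :
    IsBounded (Set.range fun k : ℕ => (f ^ k) x) := by
  induction (hs ▸ Submodule.mem_top : x ∈ Submodule.span 𝕜 s) using Submodule.span_induction with
  | mem x hx => exact h x hx
  | zero => simp
  | add x y _ _ hx hy =>
    exact (hx.add hy).subset <| Set.range_subset_iff.2 fun k => by
      simpa only [map_add] using Set.add_mem_add (Set.mem_range_self k) (Set.mem_range_self k)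
  | smul c x _ hx =>
    exact (hx.smul₀ c).subset <| Set.range_subset_iff.2 fun k => by
      simpa only [map_smul] using Set.smul_mem_smul_set (Set.mem_range_self k)

theorem LinearMap.birkhoffAverage_add_apply (n : ℕ) (x y : E) :
    birkhoffAverage 𝕜 f _root_.id n (x + y) =
      birkhoffAverage 𝕜 f _root_.id n x + birkhoffAverage 𝕜 f _root_.id n y := by
  simp [birkhoffAverage, birkhoffSum, iterate_map_add, Finset.sum_add_distrib, smul_add]

theorem LinearMap.tendsto_birkhoffAverage_sub_one_apply {y : E}
    (hy : IsBounded (Set.range fun k : ℕ => (f ^ k) y)) :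
    Tendsto (birkhoffAverage 𝕜 f _root_.id · ((f - 1) y)) atTop (𝓝 0) := by
  simp only [Module.End.coe_pow] at hy
  simpa [birkhoffAverage, birkhoffSum, iterate_map_sub, Finset.sum_sub_distrib, smul_sub] using
    tendsto_birkhoffAverage_apply_sub_birkhoffAverage 𝕜 (g := _root_.id) hy

theorem LinearMap.disjoint_ker_sub_one_range_sub_one
    (hf : ∀ x, IsBounded (Set.range fun k : ℕ => (f ^ k) x)) :
    Disjoint (LinearMap.ker (f - 1)) (LinearMap.range (f - 1)) := by
  rw [Submodule.disjoint_def]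
  rintro _ hz ⟨y, rfl⟩
  have hfix : IsFixedPt f ((f - 1) y) := sub_eq_zero.mp hz
  exact tendsto_nhds_unique (hfix.tendsto_birkhoffAverage 𝕜 _root_.id)
    (tendsto_birkhoffAverage_sub_one_apply (hf y))

theorem LinearMap.exists_tendsto_birkhoffAverage [FiniteDimensional 𝕜 E]
    (hf : ∀ x, IsBounded (Set.range fun k : ℕ => (f ^ k) x)) (x : E) :
    ∃ z, f z = z ∧ Tendsto (birkhoffAverage 𝕜 f _root_.id · x) atTop (𝓝 z) := by
  have hsup : LinearMap.ker (f - 1) ⊔ LinearMap.range (f - 1) = ⊤ :=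
    Submodule.eq_top_of_disjoint _ _ (by rw [add_comm, (f - 1).finrank_range_add_finrank_ker])
      (disjoint_ker_sub_one_range_sub_one hf)
  obtain ⟨z, hz, _, ⟨y, rfl⟩, rfl⟩ := Submodule.mem_sup.1 (hsup ▸ Submodule.mem_top : x ∈ _)
  have hfix : IsFixedPt f z := sub_eq_zero.mp hz
  refine ⟨z, hfix, ?_⟩
  simpa [birkhoffAverage_add_apply] using
    (hfix.tendsto_birkhoffAverage 𝕜 _root_.id).add (tendsto_birkhoffAverage_sub_one_apply (hf y))

end MeanErgodic

namespace Matrix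

variable {ι : Type*} [Fintype ι]

open scoped Matrix.Norms.L2Operator MatrixOrder in
theorem span_posSemidef [DecidableEq ι] :
    Submodule.span ℂ {A : Matrix ι ι ℂ | A.PosSemidef} = ⊤ := by
  simpa only [nonneg_iff_posSemidef] using CStarAlgebra.span_nonneg (A := Matrix ι ι ℂ)

open scoped Matrix.Norms.L2Operator MatrixOrder in
theorem isClosed_setOf_posSemidef [DecidableEq ι] :
    IsClosed {A : Matrix ι ι ℂ | A.PosSemidef} := by
  simpa only [nonneg_iff_posSemidef] using CStarAlgebra.isClosed_nonneg (A := Matrix ι ι ℂ)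

open scoped MatrixOrder in
theorem PosSemidef.exists_eq_conjTranspose_mul_self [DecidableEq ι] {Q : Matrix ι ι ℂ}
    (hQ : Q.PosSemidef) : ∃ B : Matrix ι ι ℂ, Q = Bᴴ * B :=
  ⟨CFC.sqrt Q, by rw [← star_eq_conjTranspose, (CFC.sqrt_nonneg Q).isSelfAdjoint.star_eq,
    CFC.sqrt_mul_sqrt_self Q hQ.nonneg]⟩

theorem exists_posSemidef_trace_eq_one [DecidableEq ι] [Nonempty ι] :
    ∃ ρ : Matrix ι ι ℂ, ρ.PosSemidef ∧ ρ.trace = 1 := by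
  obtain ⟨i⟩ := ‹Nonempty ι›
  exact ⟨diagonal (Pi.single i 1), PosSemidef.diagonal (Pi.single_nonneg.2 zero_le_one),
    by simp [trace_diagonal]⟩

section Frobenius

attribute [local instance] frobeniusNormedAddCommGroup frobeniusNormedSpace

theorem frobenius_norm_sq_eq_re_trace_conjTranspose_mul_self {m : Type*} [Fintype m]
    (B : Matrix m ι ℂ) : ‖B‖ ^ 2 = (Bᴴ * B).trace.re := by
  rw [frobenius_norm_def, ← Real.rpow_natCast, ← Real.rpow_mul (by positivity), Finset.sum_comm]
  simp only [trace, diag_apply, mul_apply, conjTranspose_apply, Complex.re_sum, RCLike.star_def,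
    Complex.conj_mul']
  norm_num [← Complex.ofReal_pow]

theorem PosSemidef.frobenius_norm_le_re_trace [DecidableEq ι] {Q : Matrix ι ι ℂ}
    (hQ : Q.PosSemidef) : ‖Q‖ ≤ Q.trace.re := by
  obtain ⟨B, rfl⟩ := hQ.exists_eq_conjTranspose_mul_self
  calc ‖Bᴴ * B‖ ≤ ‖Bᴴ‖ * ‖B‖ := frobenius_norm_mul _ _
    _ = (Bᴴ * B).trace.re := by
      rw [frobenius_norm_conjTranspose, ← sq, frobenius_norm_sq_eq_re_trace_conjTranspose_mul_self]

end Frobenius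

end Matrix

section PositiveTracePreserving

variable {ι : Type*} {Φ : Matrix ι ι ℂ →ₗ[ℂ] Matrix ι ι ℂ}

theorem posSemidef_pow_apply (hpos : ∀ ρ, ρ.PosSemidef → (Φ ρ).PosSemidef) (k : ℕ)
    {ρ : Matrix ι ι ℂ} (hρ : ρ.PosSemidef) : ((Φ ^ k) ρ).PosSemidef := by
  induction k with
  | zero => exact hρ
  | succ k ih => rw [pow_succ', Module.End.mul_apply]; exact hpos _ ih

variable [Fintype ι]

theorem trace_pow_apply (htr : ∀ ρ, (Φ ρ).trace = ρ.trace) (k : ℕ) (ρ : Matrix ι ι ℂ) :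
    ((Φ ^ k) ρ).trace = ρ.trace := by
  induction k with
  | zero => rfl
  | succ k ih => rw [pow_succ', Module.End.mul_apply, htr, ih]

attribute [local instance] frobeniusNormedAddCommGroup frobeniusNormedSpace

theorem isBounded_orbit_of_posSemidef_of_trace [DecidableEq ι]
    (hpos : ∀ ρ, ρ.PosSemidef → (Φ ρ).PosSemidef) (htr : ∀ ρ, (Φ ρ).trace = ρ.trace)
    (x : Matrix ι ι ℂ) : IsBounded (Set.range fun k : ℕ => (Φ ^ k) x) := by
  refine Φ.isBounded_orbit_of_span_eq_top span_posSemidef (fun P hP => ?_) x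
  refine isBounded_iff_forall_norm_le.2 ⟨P.trace.re, ?_⟩
  rintro _ ⟨k, rfl⟩
  simpa only [trace_pow_apply htr] using (posSemidef_pow_apply hpos k hP).frobenius_norm_le_re_trace

theorem exists_tendsto_birkhoffAverage_of_posSemidef [DecidableEq ι]
    (hpos : ∀ ρ, ρ.PosSemidef → (Φ ρ).PosSemidef) (htr : ∀ ρ, (Φ ρ).trace = ρ.trace)
    {ρ : Matrix ι ι ℂ} (hρ : ρ.PosSemidef) :
    ∃ z, z.PosSemidef ∧ z.trace = ρ.trace ∧ Φ z = z ∧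
      Tendsto (birkhoffAverage ℂ Φ _root_.id · ρ) atTop (𝓝 z) := by
  obtain ⟨z, hz, hlim⟩ :=
    Φ.exists_tendsto_birkhoffAverage (isBounded_orbit_of_posSemidef_of_trace hpos htr) ρ
  have havg_pos (N : ℕ) : (birkhoffAverage ℂ Φ _root_.id N ρ).PosSemidef := by
    rw [birkhoffAverage_congr_ring ℂ ℝ]
    refine (posSemidef_sum _ fun k _ => ?_).smul (inv_nonneg.2 N.cast_nonneg)
    simpa only [id, ← Module.End.coe_pow] using posSemidef_pow_apply hpos k hρ
  have havg_trace (N : ℕ) (hN : N ≠ 0) : (birkhoffAverage ℂ Φ _root_.id N ρ).trace = ρ.trace := by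
    rw [← traceLinearMap_apply ι ℂ ℂ, map_birkhoffAverage ℂ ℂ, birkhoffAverage_of_comp_eq]
    · rfl
    · exact funext htr
    · exact_mod_cast hN
  refine ⟨z, isClosed_setOf_posSemidef.mem_of_tendsto hlim (.of_forall havg_pos), ?_, hz, hlim⟩
  exact tendsto_nhds_unique ((continuous_id.matrix_trace.tendsto z).comp hlim)
    (tendsto_const_nhds.congr' ((eventually_ne_atTop 0).mono fun N hN => (havg_trace N hN).symm))

end PositiveTracePreserving

/-- If a positive trace-preserving map on n×n matrices has `1` as a simple
eigenvalue, the corresponding eigenvector normalizes to an invariant state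
`ρinv`, and Cesàro averages of the iterates on any state converge to `ρinv`. -/
theorem stmt7 {n : ℕ}
    (Φ : Matrix (Fin n) (Fin n) ℂ →ₗ[ℂ] Matrix (Fin n) (Fin n) ℂ)
    (hpos : ∀ ρ, ρ.PosSemidef → (Φ ρ).PosSemidef)
    (htr : ∀ ρ, (Φ ρ).trace = ρ.trace)
    (hsimple : Module.finrank ℂ (LinearMap.ker (Φ - LinearMap.id)) = 1) :
    ∃ ρinv : Matrix (Fin n) (Fin n) ℂ, ρinv.PosSemidef ∧ ρinv.trace = 1 ∧
      Φ ρinv = ρinv ∧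
      ∀ ρ : Matrix (Fin n) (Fin n) ℂ, ρ.PosSemidef → ρ.trace = 1 →
        Filter.Tendsto (fun N : ℕ => (N : ℂ)⁻¹ • ∑ k ∈ Finset.range N, (Φ ^ k) ρ)
          Filter.atTop (nhds ρinv) := by
  have : Nonempty (Fin n) := by
    obtain ⟨⟨A, _⟩, hA⟩ := Module.finrank_pos_iff_exists_ne_zero.1 (hsimple ▸ one_pos : 0 < _)
    by_contra h
    rw [not_nonempty_iff] at h
    exact hA (Subtype.ext (Subsingleton.elim A 0))
  have mem_ker {z} (hz : Φ z = z) : z ∈ LinearMap.ker (Φ - LinearMap.id) := sub_eq_zero.2 hz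
  obtain ⟨ρ₀, hρ₀, hρ₀_tr⟩ := exists_posSemidef_trace_eq_one (ι := Fin n)
  obtain ⟨ρinv, hpsd, hinv_tr, hfix, -⟩ := exists_tendsto_birkhoffAverage_of_posSemidef hpos htr hρ₀
  refine ⟨ρinv, hpsd, hinv_tr.trans hρ₀_tr, hfix, fun ρ hρ hρ_tr => ?_⟩
  obtain ⟨z, -, hz_tr, hz_fix, hlim⟩ := exists_tendsto_birkhoffAverage_of_posSemidef hpos htr hρ
  obtain rfl : z = ρinv := Submodule.eq_of_map_eq_of_finrank_eq_one hsimple (traceLinearMap _ ℂ ℂ)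
    (mem_ker hz_fix) (mem_ker hfix) (by simp [hz_tr, hρ_tr, hinv_tr, hρ₀_tr])
    (by simp [hz_tr, hρ_tr])
  simpa only [birkhoffAverage, birkhoffSum, id, Module.End.coe_pow] using hlim
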